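/- arXiv:0906.5233 — 3 statements merged into one kernel-verified Lean document; each statement's English description precedes it below -/
import Mathlib

section
/- Let G = ⟨N, T, P, S⟩ be an ε-free context-free grammar in Greibach form with productions enumerated p₁, …, p_m, and let s = s₁s₂⋯sₙ be a string over T of length n. Define the grammar G′ = ⟨N, T′, P′, S⟩ over the terminal alphabet T′ = T × {1,…,m}, where for every index j, if the j-th production of P is A → aα then P′ contains the production A → (a, j)α. For each i ∈ {1,…,n} define Dᵢ = {(a, j) ∈ T′ : a = sᵢ}. Then L(G′) ∩ L(R_{D₁,…,Dₙ}) ≠ ∅ if and only if s ∈ L(G). -/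
instance {T N : Type} [DecidableEq T] [DecidableEq N] :
    DecidableEq (ContextFreeRule T N) := fun r₁ r₂ =>
  decidable_of_iff (r₁.input = r₂.input ∧ r₁.output = r₂.output)
    (by cases r₁; cases r₂; simp)

/-- The Cartesian product language `L(R_{D₁,…,Dₙ})`: the set of strings `a₁a₂⋯aₙ`
with `aᵢ ∈ Dᵢ` for every `i`. -/
def cartesianLanguage {T : Type} (n : ℕ) (D : Fin n → Set T) : Language T :=
  { w | ∃ a : Fin n → T, (∀ i, a i ∈ D i) ∧ w = List.ofFn a }

/-- An ε-free context-free grammar in Greibach form with nonterminals `N`, start symbol `S`,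
and productions enumerated `p₁, …, p_m`, where the `j`-th production is
`lhs j → (term j) (rest j)` (a terminal followed by a list of nonterminals). -/
def greibachGrammar {T N : Type} [DecidableEq T] [DecidableEq N] (S : N) (m : ℕ)
    (lhs : Fin m → N) (term : Fin m → T) (rest : Fin m → List N) : ContextFreeGrammar T :=
  ⟨N, S, Finset.univ.image fun j : Fin m =>
    ⟨lhs j, Symbol.terminal (term j) :: (rest j).map Symbol.nonterminal⟩⟩

/-- The grammar `G′` over the terminal alphabet `T′ = T × {1,…,m}` obtained by replacing the
`j`-th production `A → aα` of `G` by `A → (a, j)α`. -/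
def annotatedGrammar {T N : Type} [DecidableEq T] [DecidableEq N] (S : N) (m : ℕ)
    (lhs : Fin m → N) (term : Fin m → T) (rest : Fin m → List N) :
    ContextFreeGrammar (T × Fin m) :=
  ⟨N, S, Finset.univ.image fun j : Fin m =>
    ⟨lhs j, Symbol.terminal (term j, j) :: (rest j).map Symbol.nonterminal⟩⟩


/-! Forgetting the production index is the terminal relabelling `Prod.fst`, and it maps the rules
of `G′` onto those of `G`. Derivations of `G′` project to derivations of `G`; conversely a derivation
of `G` lifts step by step to `G′`, because a rewriting step only looks at a nonterminal, which the
relabelling leaves untouched. Hence `L(G) = fst(L(G′))`. With `Dᵢ = fst⁻¹(sᵢ)` the Cartesian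
language is the fibre of `s` under `fst`, so it meets `L(G′)` exactly when `s ∈ fst(L(G′))`. -/

namespace Symbol

variable {T T' N : Type*}

def mapTerminal (f : T' → T) : Symbol T' N → Symbol T N
  | terminal t => terminal (f t)
  | nonterminal A => nonterminal A

@[simp] lemma mapTerminal_terminal (f : T' → T) (t : T') :
    (terminal t : Symbol T' N).mapTerminal f = terminal (f t) := rfl

@[simp] lemma mapTerminal_nonterminal (f : T' → T) (A : N) :
    (nonterminal A : Symbol T' N).mapTerminal f = nonterminal A := rfl

lemma mapTerminal_eq_nonterminal_iff {f : T' → T} {x : Symbol T' N} {A : N} :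
    x.mapTerminal f = nonterminal A ↔ x = nonterminal A := by
  cases x <;> simp

@[simp] lemma map_mapTerminal_map_terminal (f : T' → T) (w : List T') :
    (w.map terminal).map (mapTerminal f) = (w.map f).map (terminal : T → Symbol T N) := by
  simp [Function.comp_def]

lemma map_mapTerminal_eq_map_terminal_iff {f : T' → T} {u : List (Symbol T' N)} {w : List T} :
    u.map (mapTerminal f) = w.map terminal ↔
      ∃ w' : List T', u = w'.map terminal ∧ w'.map f = w := by
  induction u generalizing w with
  | nil => simp [List.map_eq_nil_iff]
  | cons x u ih =>
    rcases w with _ | ⟨a, w⟩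
    · simp
    · cases x with
      | nonterminal A => simp [List.map_eq_cons_iff]
      | terminal t =>
        simp only [List.map_cons, List.cons.injEq, mapTerminal_terminal, terminal.injEq, ih,
          List.map_eq_cons_iff]
        aesop

end Symbol

lemma Language.mem_map {α β : Type*} {f : α → β} {L : Language α} {w : List β} :
    w ∈ Language.map f L ↔ ∃ v ∈ L, v.map f = w :=
  Iff.rfl

namespace ContextFreeRule

variable {T T' N : Type*}

def mapTerminal (f : T' → T) (r : ContextFreeRule T' N) : ContextFreeRule T N :=
  ⟨r.input, r.output.map (Symbol.mapTerminal f)⟩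

variable {f : T' → T} {r : ContextFreeRule T' N}

lemma Rewrites.mapTerminal {u v : List (Symbol T' N)} (h : r.Rewrites u v) :
    (r.mapTerminal f).Rewrites (u.map (Symbol.mapTerminal f))
      (v.map (Symbol.mapTerminal f)) := by
  induction h with
  | head s => simpa [ContextFreeRule.mapTerminal] using Rewrites.head _
  | cons x _ ih => exact ih.cons _

lemma Rewrites.exists_of_mapTerminal {u : List (Symbol T' N)} {v : List (Symbol T N)}
    (h : (r.mapTerminal f).Rewrites (u.map (Symbol.mapTerminal f)) v) :
    ∃ v', r.Rewrites u v' ∧ v'.map (Symbol.mapTerminal f) = v := by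
  induction u generalizing v with
  | nil => cases h
  | cons x u ih =>
    generalize hxu : (x :: u).map (Symbol.mapTerminal f) = xu at h
    cases h with
    | head s =>
      obtain ⟨hx, rfl⟩ := List.cons.inj hxu
      rw [Symbol.mapTerminal_eq_nonterminal_iff.mp hx]
      exact ⟨r.output ++ u, Rewrites.head u, by simp [ContextFreeRule.mapTerminal]⟩
    | cons y h =>
      obtain ⟨rfl, rfl⟩ := List.cons.inj hxu
      obtain ⟨v', hv', rfl⟩ := ih h
      exact ⟨x :: v', hv'.cons x, rfl⟩

end ContextFreeRule

namespace ContextFreeGrammar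

variable {T T' : Type*}

open Classical in
noncomputable def mapTerminal (f : T' → T) (g : ContextFreeGrammar T') : ContextFreeGrammar T :=
  ⟨g.NT, g.initial, g.rules.image (ContextFreeRule.mapTerminal f)⟩

variable {f : T' → T} {g : ContextFreeGrammar T'} {u : List (Symbol T' g.NT)}

lemma mem_mapTerminal_rules {r : ContextFreeRule T g.NT} :
    r ∈ (g.mapTerminal f).rules ↔ ∃ r' ∈ g.rules, r'.mapTerminal f = r := by
  classical exact Finset.mem_image

lemma Produces.mapTerminal {v : List (Symbol T' g.NT)} (h : g.Produces u v) :
    (g.mapTerminal f).Produces (u.map (Symbol.mapTerminal f))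
      (v.map (Symbol.mapTerminal f)) := by
  obtain ⟨r, hr, huv⟩ := h
  exact ⟨r.mapTerminal f, mem_mapTerminal_rules.mpr ⟨r, hr, rfl⟩, huv.mapTerminal⟩

lemma Derives.mapTerminal {v : List (Symbol T' g.NT)} (h : g.Derives u v) :
    (g.mapTerminal f).Derives (u.map (Symbol.mapTerminal f))
      (v.map (Symbol.mapTerminal f)) := by
  induction h with
  | refl => rfl
  | tail _ hp ih => exact ih.trans_produces hp.mapTerminal

lemma Produces.exists_of_mapTerminal {v : List (Symbol T g.NT)}
    (h : (g.mapTerminal f).Produces (u.map (Symbol.mapTerminal f)) v) :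
    ∃ v', g.Produces u v' ∧ v'.map (Symbol.mapTerminal f) = v := by
  obtain ⟨_, hr', huv⟩ := h
  obtain ⟨r, hr, rfl⟩ := mem_mapTerminal_rules.mp hr'
  obtain ⟨v', hv', rfl⟩ := huv.exists_of_mapTerminal
  exact ⟨v', ⟨r, hr, hv'⟩, rfl⟩

lemma Derives.exists_of_mapTerminal {v : List (Symbol T g.NT)}
    (h : (g.mapTerminal f).Derives (u.map (Symbol.mapTerminal f)) v) :
    ∃ v', g.Derives u v' ∧ v'.map (Symbol.mapTerminal f) = v := by
  induction h with
  | refl => exact ⟨u, .refl _, rfl⟩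
  | tail _ hp ih =>
    obtain ⟨v', hv', rfl⟩ := ih
    obtain ⟨w', hw', rfl⟩ := hp.exists_of_mapTerminal
    exact ⟨w', hv'.trans_produces hw', rfl⟩

lemma language_mapTerminal (f : T' → T) (g : ContextFreeGrammar T') :
    (g.mapTerminal f).language = Language.map f g.language := by
  ext w
  simp only [Language.mem_map, mem_language_iff]
  constructor
  · intro h
    obtain ⟨v', hv', hw⟩ := Derives.exists_of_mapTerminal (u := [.nonterminal g.initial]) h
    obtain ⟨w', rfl, rfl⟩ := Symbol.map_mapTerminal_eq_map_terminal_iff.mp hw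
    exact ⟨w', hv', rfl⟩
  · rintro ⟨w', hw', rfl⟩
    convert hw'.mapTerminal (f := f) using 1
    · rfl
    · exact (Symbol.map_mapTerminal_map_terminal f w').symm

end ContextFreeGrammar

lemma greibachGrammar_eq_mapTerminal {T N : Type} [DecidableEq T] [DecidableEq N] (S : N)
    (m : ℕ) (lhs : Fin m → N) (term : Fin m → T) (rest : Fin m → List N) :
    greibachGrammar S m lhs term rest =
      (annotatedGrammar S m lhs term rest).mapTerminal Prod.fst := by
  unfold greibachGrammar annotatedGrammar ContextFreeGrammar.mapTerminal
  dsimp only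
  congr 1
  ext r
  simp [ContextFreeRule.mapTerminal, Function.comp_def]

lemma mem_cartesianLanguage_fiber_iff {T T' : Type} {f : T' → T} {n : ℕ} {s : Fin n → T}
    {w : List T'} :
    w ∈ cartesianLanguage n (fun i => {x | f x = s i}) ↔ w.map f = List.ofFn s := by
  constructor
  · rintro ⟨a, ha, rfl⟩
    rw [List.map_ofFn]
    exact congrArg List.ofFn (funext ha)
  · intro h
    obtain rfl : w.length = n := by simpa using congrArg List.length h
    have hs : List.ofFn (f ∘ w.get) = List.ofFn s := by rw [← List.map_ofFn, List.ofFn_get, h]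
    exact ⟨w.get, congrFun (List.ofFn_inj.mp hs), (List.ofFn_get w).symm⟩

lemma inf_cartesianLanguage_fiber_nonempty_iff {T T' : Type} {f : T' → T} {n : ℕ}
    {s : Fin n → T} {L : Language T'} :
    (L ⊓ cartesianLanguage n (fun i => {x | f x = s i})).Nonempty ↔
      List.ofFn s ∈ Language.map f L := by
  rw [Language.mem_map]
  change (∃ w, w ∈ L ∧ w ∈ cartesianLanguage n _) ↔ _
  simp only [mem_cartesianLanguage_fiber_iff]

theorem annotated_inter_cartesian_nonempty_iff_mem_general
    {T N : Type} [DecidableEq T] [DecidableEq N] (S : N) (m : ℕ)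
    (lhs : Fin m → N) (term : Fin m → T) (rest : Fin m → List N)
    (n : ℕ) (s : Fin n → T) :
    ((annotatedGrammar S m lhs term rest).language ⊓
        cartesianLanguage n (fun i => {x : T × Fin m | x.1 = s i}) :
      Language (T × Fin m)).Nonempty ↔
      List.ofFn s ∈ (greibachGrammar S m lhs term rest).language := by
  rw [greibachGrammar_eq_mapTerminal, ContextFreeGrammar.language_mapTerminal]
  exact inf_cartesianLanguage_fiber_nonempty_iff

/-- Let `G` be an ε-free context-free grammar in Greibach form with productions enumerated
`p₁, …, p_m` and let `s = s₁⋯sₙ` be a string over `T`.  With `G′` the annotated grammar over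
`T′ = T × {1,…,m}` and `Dᵢ = {(a, j) ∈ T′ : a = sᵢ}`, we have
`L(G′) ∩ L(R_{D₁,…,Dₙ}) ≠ ∅` iff `s ∈ L(G)`. -/
theorem annotated_inter_cartesian_nonempty_iff_mem
    {T N : Type} [Fintype T] [DecidableEq T] [DecidableEq N] (S : N) (m : ℕ)
    (lhs : Fin m → N) (term : Fin m → T) (rest : Fin m → List N)
    (n : ℕ) (s : Fin n → T) :
    ((annotatedGrammar S m lhs term rest).language ⊓
        cartesianLanguage n (fun i => {x : T × Fin m | x.1 = s i}) :
      Language (T × Fin m)).Nonempty ↔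
      List.ofFn s ∈ (greibachGrammar S m lhs term rest).language :=
  annotated_inter_cartesian_nonempty_iff_mem_general S m lhs term rest n s
end

section
/- Let G = ⟨N, T, P, S⟩ be an ε-free context-free grammar in Greibach form whose terminals are indexed as T = {t₁, …, t_k}, and let D₁, …, Dₙ be finite subsets of T. Construct the grammar G′ over the terminal alphabet {0, 1} with non-terminals N ∪ {B} ∪ {T₁, …, T_k} (all new symbols fresh) and productions: B → 0, B → 1; for each j ∈ {1,…,k}, T_j → B^{j−1} 1 B^{k−j}; and for each production A → t_j α of G, the production A → T_j α. Let s be the string of length nk obtained by concatenating, for i = 1, …, n, the bitmap bᵢ ∈ {0,1}^k whose j-th bit is 1 iff t_j ∈ Dᵢ. Then s ∈ L(G′) if and only if L(G) ∩ L(R_{D₁,…,Dₙ}) ≠ ∅. -/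
/-- An ε-free context-free grammar in Greibach form over the indexed terminal alphabet
`T = {t₁, …, t_k}` (modelled as `Fin k`), with nonterminals `N`, start symbol `S`, and
production set `P`, where `(A, j, α) ∈ P` represents the production `A → t_j α`
(a terminal followed by a list of nonterminals). -/
def greibachGrammarFin {N : Type} [DecidableEq N] (k : ℕ) (S : N)
    (P : Finset (N × Fin k × List N)) : ContextFreeGrammar (Fin k) :=
  ⟨N, S, P.image fun x =>
    ⟨x.1, Symbol.terminal x.2.1 :: x.2.2.map Symbol.nonterminal⟩⟩

/-- The bitmap grammar `G′` over the terminal alphabet `{0,1}` (modelled as `Bool`):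
its nonterminals are `N ∪ {B} ∪ {T₁, …, T_k}` (with `B = Sum.inr none` and
`T_j = Sum.inr (some j)`, all fresh), and its productions are `B → 0`, `B → 1`,
`T_j → B^{j−1} 1 B^{k−j}` for each `j`, and `A → T_j α` for each production `A → t_j α`. -/
def bitmapGrammar {N : Type} [DecidableEq N] (k : ℕ) (S : N)
    (P : Finset (N × Fin k × List N)) : ContextFreeGrammar Bool :=
  ⟨N ⊕ Option (Fin k), Sum.inl S,
    {⟨Sum.inr none, [Symbol.terminal false]⟩, ⟨Sum.inr none, [Symbol.terminal true]⟩}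
    ∪ (Finset.univ.image fun j : Fin k =>
        ⟨Sum.inr (some j),
          List.replicate j.val (Symbol.nonterminal (Sum.inr none)) ++
            Symbol.terminal true ::
              List.replicate (k - 1 - j.val) (Symbol.nonterminal (Sum.inr none))⟩)
    ∪ (P.image fun x =>
        ⟨Sum.inl x.1,
          Symbol.nonterminal (Sum.inr (some x.2.1)) ::
            x.2.2.map (fun B => Symbol.nonterminal (Sum.inl B))⟩)⟩

namespace List

lemma eq_of_flatten_eq_of_forall_length_eq {α : Type*} {d : ℕ} (hd : 0 < d)
    {L L' : List (List α)} (hL : ∀ x ∈ L, x.length = d) (hL' : ∀ x ∈ L', x.length = d)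
    (h : L.flatten = L'.flatten) : L = L' := by
  have hmap : ∀ M : List (List α), (∀ x ∈ M, x.length = d) →
      M.map length = replicate M.length d := fun M hM =>
    eq_replicate_iff.2 ⟨length_map .., by simpa using hM⟩
  have hlen : L.length * d = L'.length * d := by
    simpa [length_flatten, hmap L hL, hmap L' hL'] using congrArg length h
  rw [eq_iff_flatten_eq, hmap L hL, hmap L' hL', Nat.eq_of_mul_eq_mul_right hd hlen]
  exact ⟨h, rfl⟩

lemma forall₂_ofFn_iff {α β : Type*} {R : α → β → Prop} {n : ℕ} {a : Fin n → α}
    {b : Fin n → β} : Forall₂ R (ofFn a) (ofFn b) ↔ ∀ i, R (a i) (b i) := by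
  simp [forall₂_iff_get, Fin.forall_iff]

lemma Forall₂.forall_mem_right {α β : Type*} {R : α → β → Prop} {p : β → Prop}
    {l₁ : List α} {l₂ : List β} (h : Forall₂ R l₁ l₂) (hp : ∀ a b, R a b → p b) :
    ∀ b ∈ l₂, p b := by
  induction h with
  | nil => simp
  | cons hab _ ih => exact forall_mem_cons.2 ⟨hp _ _ hab, ih⟩

end List

namespace Language
variable {α ι : Type*}

lemma mem_prod_map_iff {f : ι → Language α} {l : List ι} {x : List α} :
    x ∈ (l.map f).prod ↔
      ∃ xs : List (List α), List.Forall₂ (fun i y => y ∈ f i) l xs ∧ x = xs.flatten := by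
  induction l generalizing x with
  | nil => simp [mem_one]
  | cons i l ih =>
    simp only [List.map_cons, List.prod_cons, mem_mul, ih, List.forall₂_cons_left_iff]
    constructor
    · rintro ⟨y, hy, _, ⟨xs, hxs, rfl⟩, rfl⟩
      exact ⟨y :: xs, ⟨y, xs, hy, hxs, rfl⟩, rfl⟩
    · rintro ⟨_, ⟨y, xs, hy, hxs, rfl⟩, rfl⟩
      exact ⟨y, hy, _, ⟨xs, hxs, rfl⟩, rfl⟩

lemma mem_prod_map_singleton (w : List α) : w ∈ (w.map fun a => ({[a]} : Language α)).prod := by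
  induction w with
  | nil => exact nil_mem_one
  | cons a w ih =>
    rw [List.map_cons, List.prod_cons]
    exact append_mem_mul (Set.mem_singleton [a]) ih

lemma length_eq_of_mem_pow {l : Language α} {d m : ℕ} (hl : ∀ x ∈ l, x.length = d)
    {x : List α} (hx : x ∈ l ^ m) : x.length = m * d := by
  induction m generalizing x with
  | zero => simp_all [mem_one]
  | succ m ih =>
    obtain ⟨y, hy, z, hz, rfl⟩ := mem_mul.1 (pow_succ l m ▸ hx)
    rw [List.length_append, ih hy, hl z hz, Nat.succ_mul]

end Language

namespace ContextFreeGrammar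
variable {T : Type*} {g : ContextFreeGrammar T}

lemma Derives.length_le (hg : ∀ r ∈ g.rules, r.output ≠ []) {u v : List (Symbol T g.NT)}
    (h : g.Derives u v) : u.length ≤ v.length := by
  induction h with
  | refl => exact le_rfl
  | tail _ hp ih =>
    obtain ⟨r, hr, hrw⟩ := hp
    obtain ⟨p, q, rfl, rfl⟩ := hrw.exists_parts
    have := List.length_pos_of_ne_nil (hg r hr)
    simp only [List.length_append, List.length_singleton] at ih ⊢
    omega

lemma ne_nil_of_mem_language (hg : ∀ r ∈ g.rules, r.output ≠ []) {w : List T}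
    (hw : w ∈ g.language) : w ≠ [] := by
  have := ((mem_language_iff g w).1 hw).length_le hg
  rw [List.length_singleton, List.length_map] at this
  exact List.ne_nil_of_length_pos this

lemma derives_flatten_of_forall₂ {u : List (Symbol T g.NT)} {vs : List (List (Symbol T g.NT))}
    (h : List.Forall₂ (fun s v => g.Derives [s] v) u vs) : g.Derives u vs.flatten := by
  induction h with
  | nil => exact Derives.refl []
  | @cons s v u vs hs _ ih =>
    exact (hs.append_right u).trans (ih.append_left v)

lemma Derives.map {U : Type*} {g' : ContextFreeGrammar U} (φ : g.NT → g'.NT)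
    (f : Symbol T g.NT → Symbol U g'.NT) (hf : ∀ X, f (.nonterminal X) = .nonterminal (φ X))
    (hg : ∀ r ∈ g.rules, ⟨φ r.input, r.output.map f⟩ ∈ g'.rules)
    {u v : List (Symbol T g.NT)} (h : g.Derives u v) : g'.Derives (u.map f) (v.map f) := by
  induction h with
  | refl => exact Derives.refl _
  | tail _ hp ih =>
    obtain ⟨r, hr, hrw⟩ := hp
    obtain ⟨p, q, rfl, rfl⟩ := hrw.exists_parts
    refine ih.trans_produces ⟨_, hg r hr, ?_⟩
    simpa [hf] using ContextFreeRule.rewrites_of_exists_parts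
      (⟨φ r.input, r.output.map f⟩ : ContextFreeRule U g'.NT) (p.map f) (q.map f)

section Interpretation
variable {N : Type*}

def symbolLanguage (L : N → Language T) : Symbol T N → Language T
  | .terminal a => {[a]}
  | .nonterminal X => L X

variable {L : g.NT → Language T}

lemma Produces.prod_symbolLanguage_le (hL : ∀ r ∈ g.rules, (r.output.map (symbolLanguage L)).prod ≤ L r.input)
    {u v : List (Symbol T g.NT)} (h : g.Produces u v) :
    (v.map (symbolLanguage L)).prod ≤ (u.map (symbolLanguage L)).prod := by
  obtain ⟨r, hr, hrw⟩ := h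
  obtain ⟨p, q, rfl, rfl⟩ := hrw.exists_parts
  simp only [List.map_append, List.prod_append, List.map_singleton, List.prod_singleton]
  exact mul_le_mul' (mul_le_mul' le_rfl (hL r hr)) le_rfl

theorem mem_prod_symbolLanguage_of_derives
    (hL : ∀ r ∈ g.rules, (r.output.map (symbolLanguage L)).prod ≤ L r.input)
    {u : List (Symbol T g.NT)} {w : List T} (h : g.Derives u (w.map .terminal)) :
    w ∈ (u.map (symbolLanguage L)).prod := by
  induction h using Relation.ReflTransGen.head_induction_on with
  | refl => simpa [List.map_map, Function.comp_def, symbolLanguage] using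
      Language.mem_prod_map_singleton w
  | head hp _ ih => exact hp.prod_symbolLanguage_le hL ih

end Interpretation

section Substitution
variable {U : Type*} (g) (σ : T → Language U)

def substLanguage (u : List (Symbol T g.NT)) : Language U :=
  {x | ∃ w : List T, g.Derives u (w.map .terminal) ∧ x ∈ (w.map σ).prod}

variable {g σ}

lemma Derives.substLanguage_le {u v : List (Symbol T g.NT)} (h : g.Derives u v) :
    g.substLanguage σ v ≤ g.substLanguage σ u :=
  fun _ ⟨w, hw, hx⟩ => ⟨w, h.trans hw, hx⟩

lemma le_substLanguage_terminal (a : T) : σ a ≤ g.substLanguage σ [.terminal a] :=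
  fun x hx => ⟨[a], Derives.refl _, by rwa [List.map_singleton, List.prod_singleton]⟩

lemma substLanguage_mul_le (u v : List (Symbol T g.NT)) :
    g.substLanguage σ u * g.substLanguage σ v ≤ g.substLanguage σ (u ++ v) := by
  rintro _ ⟨x, ⟨w, hw, hx⟩, y, ⟨w', hw', hy⟩, rfl⟩
  refine ⟨w ++ w', ?_, ?_⟩
  · simpa using (hw.append_right v).trans (hw'.append_left _)
  · simpa using Language.append_mem_mul hx hy

lemma prod_substLanguage_le {ι : Type*} (f : ι → Symbol T g.NT) (l : List ι) :
    (l.map fun i => g.substLanguage σ [f i]).prod ≤ g.substLanguage σ (l.map f) := by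
  induction l with
  | nil => exact fun x hx => ⟨[], Derives.refl _, hx⟩
  | cons i l ih => exact (mul_le_mul' le_rfl ih).trans (substLanguage_mul_le [f i] (l.map f))

end Substitution

end ContextFreeGrammar

section Bitmap
variable {N : Type} [DecidableEq N] {k : ℕ} {S : N} {P : Finset (N × Fin k × List N)}

open ContextFreeGrammar

lemma mem_greibachGrammarFin_rules {r : ContextFreeRule (Fin k) N} :
    r ∈ (greibachGrammarFin k S P).rules ↔
      ∃ x ∈ P, r = ⟨x.1, .terminal x.2.1 :: x.2.2.map .nonterminal⟩ := by
  show r ∈ Finset.image _ P ↔ _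
  simp only [Finset.mem_image, eq_comm]

lemma mem_bitmapGrammar_rules {r : ContextFreeRule Bool (N ⊕ Option (Fin k))} :
    r ∈ (bitmapGrammar k S P).rules ↔
      r = ⟨.inr none, [.terminal false]⟩ ∨ r = ⟨.inr none, [.terminal true]⟩ ∨
      (∃ j : Fin k, r = ⟨.inr (some j),
          List.replicate j.val (.nonterminal (.inr none)) ++
            .terminal true :: List.replicate (k - 1 - j.val) (.nonterminal (.inr none))⟩) ∨
      (∃ x ∈ P, r = ⟨.inl x.1,
          .nonterminal (.inr (some x.2.1)) :: x.2.2.map fun B => .nonterminal (.inl B)⟩) := by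
  show r ∈ (_ ∪ _ ∪ _ : Finset _) ↔ _
  simp only [Finset.mem_union, Finset.mem_insert, Finset.mem_singleton,
    Finset.mem_image, Finset.mem_univ, true_and, or_assoc, eq_comm]

lemma greibachGrammarFin_output_ne_nil {r : ContextFreeRule (Fin k) N}
    (hr : r ∈ (greibachGrammarFin k S P).rules) : r.output ≠ [] := by
  obtain ⟨x, -, rfl⟩ := mem_greibachGrammarFin_rules.1 hr
  exact List.cons_ne_nil _ _

def blockLanguage (k : ℕ) (j : Fin k) : Language Bool :=
  {t | t.length = k ∧ t[(j : ℕ)]? = some true}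

lemma mem_blockLanguage {j : Fin k} {t : List Bool} :
    t ∈ blockLanguage k j ↔ t.length = k ∧ t[(j : ℕ)]? = some true :=
  Iff.rfl

def bitmap (D : Finset (Fin k)) : List Bool :=
  List.ofFn fun j => decide (j ∈ D)

lemma bitmap_mem_blockLanguage_iff {D : Finset (Fin k)} {j : Fin k} :
    bitmap D ∈ blockLanguage k j ↔ j ∈ D := by
  simp [bitmap, mem_blockLanguage]

def bitmapInterp (k : ℕ) (S : N) (P : Finset (N × Fin k × List N)) :
    N ⊕ Option (Fin k) → Language Bool
  | .inl A => (greibachGrammarFin k S P).substLanguage (blockLanguage k) [.nonterminal A]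
  | .inr none => {t | t.length = 1}
  | .inr (some j) => blockLanguage k j

lemma prod_blockRule_le_blockLanguage (j : Fin k) :
    ((List.replicate j.val (.nonterminal (.inr none)) ++
        .terminal true :: List.replicate (k - 1 - j.val) (.nonterminal (.inr none)) :
          List (Symbol Bool (N ⊕ Option (Fin k)))).map
      (symbolLanguage (bitmapInterp k S P))).prod ≤ blockLanguage k j := by
  have hB : ∀ t ∈ symbolLanguage (bitmapInterp k S P) (.nonterminal (.inr none)),
      t.length = 1 := fun _ ht => ht
  simp only [List.map_append, List.map_cons, List.map_replicate, List.prod_append,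
    List.prod_cons, List.prod_replicate]
  rintro _ ⟨x, hx, _, ⟨_, rfl, z, hz, rfl⟩, rfl⟩
  have hxj : x.length = j := by simpa using Language.length_eq_of_mem_pow hB hx
  have hzj : z.length = k - 1 - j := by simpa using Language.length_eq_of_mem_pow hB hz
  refine mem_blockLanguage.2 ⟨?_, ?_⟩
  · simp only [List.length_append, hxj, hzj, List.length_cons, List.length_nil]
    omega
  · simp [hxj]

lemma prod_liftedRule_le_bitmapInterp {x : N × Fin k × List N} (hx : x ∈ P) :
    ((.nonterminal (.inr (some x.2.1)) :: x.2.2.map fun B => .nonterminal (.inl B)).map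
      (symbolLanguage (bitmapInterp k S P))).prod ≤ bitmapInterp k S P (.inl x.1) := by
  set g := greibachGrammarFin k S P
  have hrule : g.Produces [Symbol.nonterminal x.1]
      (Symbol.terminal x.2.1 :: x.2.2.map Symbol.nonterminal) :=
    ⟨_, mem_greibachGrammarFin_rules.2 ⟨x, hx, rfl⟩, ContextFreeRule.Rewrites.input_output⟩
  calc _ = blockLanguage k x.2.1 *
        (x.2.2.map fun B => g.substLanguage (blockLanguage k) [Symbol.nonterminal B]).prod := by
        simp only [List.map_cons, List.prod_cons, List.map_map]
        rfl
    _ ≤ g.substLanguage (blockLanguage k) [.terminal x.2.1] *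
          g.substLanguage (blockLanguage k) (x.2.2.map Symbol.nonterminal) :=
        mul_le_mul' (le_substLanguage_terminal _) (prod_substLanguage_le _ _)
    _ ≤ g.substLanguage (blockLanguage k) (.terminal x.2.1 :: x.2.2.map Symbol.nonterminal) :=
        substLanguage_mul_le _ _
    _ ≤ bitmapInterp k S P (.inl x.1) := hrule.single.substLanguage_le

lemma prod_output_le_bitmapInterp {r : ContextFreeRule Bool (N ⊕ Option (Fin k))}
    (hr : r ∈ (bitmapGrammar k S P).rules) :
    (r.output.map (symbolLanguage (bitmapInterp k S P))).prod ≤ bitmapInterp k S P r.input := by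
  rcases mem_bitmapGrammar_rules.1 hr with rfl | rfl | ⟨j, rfl⟩ | ⟨x, hx, rfl⟩
  iterate 2
    rw [List.map_singleton, List.prod_singleton]
    rintro _ rfl
    rfl
  · exact prod_blockRule_le_blockLanguage j
  · exact prod_liftedRule_le_bitmapInterp hx

def liftSymbol : Symbol (Fin k) N → Symbol Bool (N ⊕ Option (Fin k))
  | .terminal j => .nonterminal (.inr (some j))
  | .nonterminal A => .nonterminal (.inl A)

lemma bitmapGrammar_derives_map_liftSymbol {u v : List (Symbol (Fin k) N)}
    (h : (greibachGrammarFin k S P).Derives u v) :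
    (bitmapGrammar k S P).Derives (u.map liftSymbol) (v.map liftSymbol) := by
  refine h.map (g' := bitmapGrammar k S P) Sum.inl liftSymbol (fun _ => rfl) fun r hr => ?_
  obtain ⟨x, hx, rfl⟩ := mem_greibachGrammarFin_rules.1 hr
  refine mem_bitmapGrammar_rules.2 (.inr (.inr (.inr ⟨x, hx, ?_⟩)))
  -- `simp` does not see through `(greibachGrammarFin k S P).NT`, so restate the rule over `N`
  show (⟨_, (Symbol.terminal x.2.1 :: x.2.2.map Symbol.nonterminal).map liftSymbol⟩ :
    ContextFreeRule Bool (N ⊕ Option (Fin k))) = _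
  simp only [List.map_cons, List.map_map]
  rfl

lemma bitmapGrammar_derives_replicate {m : ℕ} {t : List Bool} (ht : t.length = m) :
    (bitmapGrammar k S P).Derives (List.replicate m (.nonterminal (.inr none)))
      (t.map .terminal) := by
  subst ht
  induction t with
  | nil => exact Derives.refl _
  | cons b t ih =>
    have hrule : (⟨.inr none, [.terminal b]⟩ : ContextFreeRule Bool (N ⊕ Option (Fin k))) ∈
        (bitmapGrammar k S P).rules := by
      cases b <;> simp [mem_bitmapGrammar_rules]
    exact ((Produces.single ⟨_, hrule, ContextFreeRule.Rewrites.input_output⟩).append_right _).trans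
      (ih.append_left _)

lemma bitmapGrammar_derives_of_mem_blockLanguage {j : Fin k} {t : List Bool}
    (ht : t ∈ blockLanguage k j) :
    (bitmapGrammar k S P).Derives [.nonterminal (.inr (some j))] (t.map .terminal) := by
  obtain ⟨hlen, hj⟩ := mem_blockLanguage.1 ht
  obtain ⟨hjt, htrue⟩ := List.getElem?_eq_some_iff.1 hj
  have hsplit : t = t.take j ++ true :: t.drop (j + 1) := by
    rw [← htrue, ← List.drop_eq_getElem_cons hjt, List.take_append_drop]
  have hrule := mem_bitmapGrammar_rules (S := S) (P := P).2 (.inr (.inr (.inl ⟨j, rfl⟩)))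
  refine (Produces.single ⟨_, hrule, ContextFreeRule.Rewrites.input_output⟩).trans ?_
  rw [hsplit, List.map_append, List.map_cons]
  exact ((bitmapGrammar_derives_replicate (by simp; omega)).append_right _).trans
    (((bitmapGrammar_derives_replicate (by simp; omega)).append_left [.terminal true]).append_left _)

theorem mem_bitmapGrammar_language_iff {t : List Bool} :
    t ∈ (bitmapGrammar k S P).language ↔
      ∃ w ∈ (greibachGrammarFin k S P).language, t ∈ (w.map (blockLanguage k)).prod := by
  constructor
  · intro ht
    have := mem_prod_symbolLanguage_of_derives (L := bitmapInterp k S P)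
      (fun r hr => prod_output_le_bitmapInterp hr) ((mem_language_iff _ _).1 ht)
    rw [List.map_singleton, List.prod_singleton] at this
    obtain ⟨w, hw, htw⟩ : t ∈ bitmapInterp k S P (.inl S) := this
    exact ⟨w, hw, htw⟩
  · rintro ⟨w, hw, ht⟩
    obtain ⟨ts, hts, rfl⟩ := Language.mem_prod_map_iff.1 ht
    have hblocks : List.Forall₂
        (fun (s : Symbol Bool (N ⊕ Option (Fin k))) v => (bitmapGrammar k S P).Derives [s] v)
        ((w.map Symbol.terminal).map liftSymbol) (ts.map (List.map Symbol.terminal)) := by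
      simp only [List.map_map, List.forall₂_map_left_iff, List.forall₂_map_right_iff]
      exact hts.imp fun j b hb => bitmapGrammar_derives_of_mem_blockLanguage hb
    rw [mem_language_iff, List.map_flatten]
    exact (bitmapGrammar_derives_map_liftSymbol hw).trans (derives_flatten_of_forall₂ hblocks)

lemma flatten_ofFn_bitmap_mem_prod_iff (hk : 0 < k) {n : ℕ} {D : Fin n → Finset (Fin k)}
    {w : List (Fin k)} :
    (List.ofFn fun i => bitmap (D i)).flatten ∈ (w.map (blockLanguage k)).prod ↔
      w ∈ cartesianLanguage n fun i => (D i : Set (Fin k)) := by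
  rw [Language.mem_prod_map_iff]
  constructor
  · rintro ⟨ts, hts, hflat⟩
    have hlen : ∀ b ∈ ts, b.length = k :=
      hts.forall_mem_right fun _ _ hb => (mem_blockLanguage.1 hb).1
    obtain rfl := List.eq_of_flatten_eq_of_forall_length_eq hk hlen (by simp [bitmap]) hflat.symm
    obtain ⟨hwn, hget⟩ := List.forall₂_iff_get.1 hts
    rw [List.length_ofFn] at hwn
    refine ⟨fun i => w[i], fun i => ?_, List.ext_getElem (by simp [hwn]) (by simp)⟩
    simpa [bitmap_mem_blockLanguage_iff] using hget i (by omega) (by simp)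
  · rintro ⟨a, ha, rfl⟩
    exact ⟨_, List.forall₂_ofFn_iff.2 fun i => bitmap_mem_blockLanguage_iff.2 (ha i), rfl⟩

end Bitmap

/-- Let `G` be an ε-free Greibach-form grammar over the indexed alphabet `T = {t₁,…,t_k}`
and let `D₁, …, Dₙ` be finite subsets of `T`.  Let `G′` be the bitmap grammar over `{0,1}`
and let `s` be the concatenation of the bitmaps `bᵢ ∈ {0,1}^k`, where the `j`-th bit of `bᵢ`
is `1` iff `t_j ∈ Dᵢ`.  Then `s ∈ L(G′)` iff `L(G) ∩ L(R_{D₁,…,Dₙ}) ≠ ∅`. -/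
theorem bitmap_string_mem_iff_inter_nonempty
    {N : Type} [DecidableEq N] (k : ℕ) (S : N) (P : Finset (N × Fin k × List N))
    (n : ℕ) (D : Fin n → Finset (Fin k)) :
    (List.ofFn fun i : Fin n =>
        List.ofFn fun j : Fin k => decide (j ∈ D i)).flatten ∈
        (bitmapGrammar k S P).language ↔
      ((greibachGrammarFin k S P).language ⊓
          cartesianLanguage n (fun i => (D i : Set (Fin k))) :
        Language (Fin k)).Nonempty := by
  rw [mem_bitmapGrammar_language_iff]
  refine exists_congr fun w => and_congr_right fun hw => ?_
  obtain ⟨j, -⟩ := List.exists_mem_of_ne_nil w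
    (ContextFreeGrammar.ne_nil_of_mem_language (fun _ => greibachGrammarFin_output_ne_nil) hw)
  exact flatten_ofFn_bitmap_mem_prod_iff j.pos
end

section
/- Let Σ be a finite alphabet, let # be a symbol not in Σ, and let N be a natural number. Consider the linear context-free grammar over terminal alphabet Σ ∪ {#} with non-terminals S₀, S₁, …, S_N, start symbol S_N, and productions: S_k → d S_k d for every d ∈ Σ and 0 ≤ k ≤ N (matching); S_k → d₁ S_{k−1} d₂ for all d₁, d₂ ∈ Σ with d₁ ≠ d₂ and 1 ≤ k ≤ N (substitution); S_k → d S_{k−1} and S_k → S_{k−1} d for every d ∈ Σ and 1 ≤ k ≤ N (deletion and insertion); and S_k → # for 0 ≤ k ≤ N. The language generated by this grammar is exactly { x · # · reverse(y) : x, y ∈ Σ* and the edit distance between x and y is at most N }. -/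
/-- A cost function for `levenshtein` (as in the former `Mathlib.Data.List.EditDistance.Defs`). -/
structure Levenshtein.Cost (α β δ : Type*) where
  /-- Cost to delete an element from a list. -/
  delete : α → δ
  /-- Cost in insert an element into a list. -/
  insert : β → δ
  /-- Cost to substitute one element for another in a list. -/
  substitute : α → β → δ

/-- The default cost function: deletion, insertion and substitution cost 1, matching costs 0. -/
def Levenshtein.defaultCost {α : Type*} [DecidableEq α] : Levenshtein.Cost α α ℕ where
  delete _ := 1
  insert _ := 1
  substitute a b := if a = b then 0 else 1

/-- One step of the dynamic program computing the Levenshtein distances of suffixes. -/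
def Levenshtein.impl {α β δ : Type*} [AddZeroClass δ] [Min δ] (C : Levenshtein.Cost α β δ)
    (xs : List β) (x : α) (d : {r : List δ // 0 < r.length}) :
    {r : List δ // 0 < r.length} :=
  let ⟨ds, w⟩ := d
  xs.zip (ds.zip ds.tail) |>.foldr
    (init := ⟨[C.delete x + ds.getLast (List.length_pos_iff.mp w)], by simp⟩)
    (fun ⟨y, d₀, d₁⟩ ⟨r, w⟩ =>
      ⟨min (C.delete x + r[0]) (min (C.insert y + d₀) (C.substitute x y + d₁)) :: r, by simp⟩)

/-- The Levenshtein distances of all suffixes of `xs` to `ys`. -/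
def suffixLevenshtein {α β δ : Type*} [AddZeroClass δ] [Min δ] (C : Levenshtein.Cost α β δ)
    (xs : List α) (ys : List β) : {r : List δ // 0 < r.length} :=
  xs.foldr
    (fun x r => Levenshtein.impl C ys x r)
    (ys.foldr (fun y dists => ⟨(C.insert y + dists.1[0]'dists.2) :: dists.1, by simp⟩)
      ⟨[0], by simp⟩)

/-- The Levenshtein (edit) distance between `xs` and `ys` with cost function `C`. -/
def levenshtein {α β δ : Type*} [AddZeroClass δ] [Min δ] (C : Levenshtein.Cost α β δ)
    (xs : List α) (ys : List β) : δ :=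
  let ⟨r, w⟩ := suffixLevenshtein C xs ys
  r[0]

/-- The linear context-free grammar for edit distance at most `N`, over the terminal
alphabet `Σ ∪ {#}` (modelled as `Option α`, with `#` the fresh symbol `none`): its
nonterminals are `S₀, S₁, …, S_N` (modelled as `Fin (N+1)`), its start symbol is `S_N`,
and its productions are `S_k → d S_k d` for every `d ∈ Σ` (matching),
`S_k → d₁ S_{k−1} d₂` for all `d₁ ≠ d₂ ∈ Σ` (substitution), `S_k → d S_{k−1}` and
`S_k → S_{k−1} d` for every `d ∈ Σ` (deletion and insertion), and `S_k → #`. -/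
def editDistanceGrammar (α : Type) [Fintype α] [DecidableEq α] (N : ℕ) :
    ContextFreeGrammar (Option α) :=
  ⟨Fin (N + 1), Fin.last N,
    -- matching: S_k → d S_k d
    (Finset.univ.image fun p : α × Fin (N + 1) =>
      ⟨p.2, [Symbol.terminal (some p.1), Symbol.nonterminal p.2,
             Symbol.terminal (some p.1)]⟩)
    -- substitution: S_{k} → d₁ S_{k−1} d₂ for d₁ ≠ d₂
    ∪ ((Finset.univ.filter fun p : α × α × Fin N => p.1 ≠ p.2.1).image fun p =>
      ⟨p.2.2.succ, [Symbol.terminal (some p.1), Symbol.nonterminal p.2.2.castSucc,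
                    Symbol.terminal (some p.2.1)]⟩)
    -- deletion: S_k → d S_{k−1}
    ∪ (Finset.univ.image fun p : α × Fin N =>
      ⟨p.2.succ, [Symbol.terminal (some p.1), Symbol.nonterminal p.2.castSucc]⟩)
    -- insertion: S_k → S_{k−1} d
    ∪ (Finset.univ.image fun p : α × Fin N =>
      ⟨p.2.succ, [Symbol.nonterminal p.2.castSucc, Symbol.terminal (some p.1)]⟩)
    -- sentinel: S_k → #
    ∪ (Finset.univ.image fun k : Fin (N + 1) => ⟨k, [Symbol.terminal none]⟩)⟩

/-!
The grammar is linear, and a derivation from `S_k` peels letters off both ends of the word in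
lockstep with the Levenshtein recurrence: `S_k → d S_k d` is a free match, while the rules into
`S_{k-1}` are a substitution, a deletion or an insertion, each spending one unit of the budget `k`;
`S_k → #` is reached exactly when both remaining words are empty. Soundness is an induction on
derivations that tracks the terminal context around the unique nonterminal; completeness is a
recursion along the Levenshtein recurrence.
-/

namespace Levenshtein

section Cost

variable {α β δ : Type*} [AddZeroClass δ] [Min δ] (C : Cost α β δ)

theorem impl_nil_val (x : α) (s : {r : List δ // 0 < r.length}) :
    (impl C [] x s).1 = [C.delete x + s.1.getLast (List.length_pos_iff.mp s.2)] :=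
  rfl

theorem impl_cons_val_tail (y : β) (ys : List β) (x : α) (s : {r : List δ // 0 < r.length})
    (h : 0 < s.1.tail.length) :
    (impl C (y :: ys) x s).1.tail = (impl C ys x ⟨s.1.tail, h⟩).1 := by
  obtain ⟨_ | ⟨d₀, _ | ⟨d₁, ds⟩⟩, w⟩ := s
  · simp at w
  · simp at h
  · rfl

theorem impl_cons_val_zero (y : β) (ys : List β) (x : α) (d₀ d₁ : δ) (ds : List δ)
    (w : 0 < (d₀ :: d₁ :: ds).length) :
    (impl C (y :: ys) x ⟨d₀ :: d₁ :: ds, w⟩).1[0]'(impl C _ x _).2 =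
      min (C.delete x + (impl C ys x ⟨d₁ :: ds, by simp⟩).1[0]'(impl C _ x _).2)
        (min (C.insert y + d₀) (C.substitute x y + d₁)) :=
  rfl

theorem suffixLevenshtein_val_eq_cons (xs : List α) (ys : List β) :
    (suffixLevenshtein C xs ys).1 = levenshtein C xs ys :: (suffixLevenshtein C xs ys).1.tail := by
  unfold levenshtein
  generalize suffixLevenshtein C xs ys = s
  obtain ⟨_ | ⟨d, ds⟩, w⟩ := s
  · simp at w
  · rfl

theorem suffixLevenshtein_nil_right (xs : List α) :
    (suffixLevenshtein C xs ([] : List β)).1 = [levenshtein C xs []] := by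
  induction xs with
  | nil => rfl
  | cons x xs ih =>
    have h : (suffixLevenshtein C (x :: xs) ([] : List β)).1 =
        [C.delete x + levenshtein C xs []] := by
      show (impl C [] x (suffixLevenshtein C xs [])).1 = _
      simp only [impl_nil_val, ih, List.getLast_singleton]
    have := suffixLevenshtein_val_eq_cons C (x :: xs) []
    rw [h] at this ⊢
    simpa using this

theorem suffixLevenshtein_cons_right_tail (xs : List α) (y : β) (ys : List β) :
    (suffixLevenshtein C xs (y :: ys)).1.tail = (suffixLevenshtein C xs ys).1 := by
  induction xs with
  | nil => rfl
  | cons x xs ih =>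
    show (impl C (y :: ys) x (suffixLevenshtein C xs (y :: ys))).1.tail =
      (impl C ys x (suffixLevenshtein C xs ys)).1
    rw [impl_cons_val_tail C y ys x _ (ih ▸ (suffixLevenshtein C xs ys).2)]
    congr 2
    exact Subtype.ext ih

theorem levenshtein_nil_cons (y : β) (ys : List β) :
    levenshtein C [] (y :: ys) = C.insert y + levenshtein C [] ys :=
  rfl

theorem levenshtein_cons_nil (x : α) (xs : List α) :
    levenshtein C (x :: xs) [] = C.delete x + levenshtein C xs [] := by
  show (impl C [] x (suffixLevenshtein C xs [])).1[0]'(impl C _ x _).2 = _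
  simp only [impl_nil_val, suffixLevenshtein_nil_right, List.getLast_singleton]
  rfl

/-- Unlike the textbook recurrence, this implementation charges `C.delete x` to the subproblem
that drops `y` and `C.insert y` to the one that drops `x`; for `defaultCost` the two agree. -/
theorem levenshtein_cons_cons (x : α) (xs : List α) (y : β) (ys : List β) :
    levenshtein C (x :: xs) (y :: ys) =
      min (C.delete x + levenshtein C (x :: xs) ys)
        (min (C.insert y + levenshtein C xs (y :: ys))
          (C.substitute x y + levenshtein C xs ys)) := by
  have hS : suffixLevenshtein C xs (y :: ys) = ⟨levenshtein C xs (y :: ys) ::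
      levenshtein C xs ys :: (suffixLevenshtein C xs ys).1.tail, by simp⟩ := by
    apply Subtype.ext
    dsimp only
    rw [suffixLevenshtein_val_eq_cons, suffixLevenshtein_cons_right_tail,
      ← suffixLevenshtein_val_eq_cons]
  have hT : (⟨levenshtein C xs ys :: (suffixLevenshtein C xs ys).1.tail, by simp⟩ :
      {r : List δ // 0 < r.length}) = suffixLevenshtein C xs ys :=
    Subtype.ext (suffixLevenshtein_val_eq_cons C xs ys).symm
  show (impl C (y :: ys) x (suffixLevenshtein C xs (y :: ys))).1[0]'(impl C _ x _).2 = _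
  rw [hS, impl_cons_val_zero, hT]
  rfl

end Cost

section DefaultCost

variable {α : Type*} [DecidableEq α]

@[simp] theorem defaultCost_delete (a : α) : (defaultCost : Cost α α ℕ).delete a = 1 := rfl

@[simp] theorem defaultCost_insert (a : α) : (defaultCost : Cost α α ℕ).insert a = 1 := rfl

@[simp] theorem defaultCost_substitute (a b : α) :
    (defaultCost : Cost α α ℕ).substitute a b = if a = b then 0 else 1 := rfl

theorem levenshtein_cons_cons_self_le (a : α) (x y : List α) :
    levenshtein defaultCost (a :: x) (a :: y) ≤ levenshtein defaultCost x y := by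
  rw [levenshtein_cons_cons]
  exact (min_le_right _ _).trans ((min_le_right _ _).trans (by simp))

theorem levenshtein_cons_cons_le (a b : α) (x y : List α) :
    levenshtein defaultCost (a :: x) (b :: y) ≤ levenshtein defaultCost x y + 1 := by
  rw [levenshtein_cons_cons]
  refine (min_le_right _ _).trans ((min_le_right _ _).trans ?_)
  simp only [defaultCost_substitute]
  split <;> omega

theorem levenshtein_cons_left_le (a : α) (x y : List α) :
    levenshtein defaultCost (a :: x) y ≤ levenshtein defaultCost x y + 1 := by
  cases y with
  | nil => simp [levenshtein_cons_nil, add_comm]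
  | cons b y =>
    rw [levenshtein_cons_cons]
    exact (min_le_right _ _).trans ((min_le_left _ _).trans (by simp [add_comm]))

theorem levenshtein_cons_right_le (b : α) (x y : List α) :
    levenshtein defaultCost x (b :: y) ≤ levenshtein defaultCost x y + 1 := by
  cases x with
  | nil => simp [levenshtein_nil_cons, add_comm]
  | cons a x =>
    rw [levenshtein_cons_cons]
    exact (min_le_left _ _).trans (by simp [add_comm])

end DefaultCost

end Levenshtein

theorem Fin.exists_succ_eq_of_lt {N n : ℕ} {k : Fin (N + 1)} (h : n < k) :
    ∃ j : Fin N, j.succ = k ∧ n ≤ j.castSucc := by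
  obtain ⟨j, rfl⟩ := Fin.exists_succ_eq_of_ne_zero (Fin.pos_iff_ne_zero.1 (Nat.zero_lt_of_lt h))
  exact ⟨j, rfl, by simp at h ⊢; omega⟩

theorem Symbol.nonterminal_notMem_map_terminal {T N : Type*} (n : N) (u : List T) :
    Symbol.nonterminal n ∉ u.map (Symbol.terminal (N := N)) := by
  simp

namespace ContextFreeGrammar

variable {T : Type*} {g : ContextFreeGrammar T}

theorem derives_of_mem_rules {A B : g.NT} {p q w : List (Symbol T g.NT)}
    (hr : ⟨A, p ++ .nonterminal B :: q⟩ ∈ g.rules) (hB : g.Derives [.nonterminal B] w) :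
    g.Derives [.nonterminal A] (p ++ w ++ q) := by
  have hA : g.Produces [.nonterminal A] (p ++ .nonterminal B :: q) :=
    ⟨_, hr, ContextFreeRule.Rewrites.input_output⟩
  exact hA.trans_derives (by simpa using (hB.append_left p).append_right q)

theorem Derives.eq_map_terminal {u : List T} {v : List (Symbol T g.NT)}
    (h : g.Derives (u.map .terminal) v) : v = u.map .terminal := by
  obtain rfl | ⟨_, huv, -⟩ := h.eq_or_head
  · rfl
  · obtain ⟨r, -, hr⟩ := huv.exists_nonterminal_input_mem
    simp at hr

end ContextFreeGrammar

namespace EditDistanceGrammar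

open Symbol Levenshtein ContextFreeGrammar

variable {α : Type} {N : ℕ}

def editWord (x y : List α) : List (Option α) :=
  x.map some ++ none :: (y.map some).reverse

@[simp] theorem editWord_nil_nil : editWord ([] : List α) [] = [none] := rfl

@[simp] theorem editWord_cons_left (a : α) (x y : List α) :
    editWord (a :: x) y = some a :: editWord x y := rfl

@[simp] theorem editWord_cons_right (x : List α) (b : α) (y : List α) :
    editWord x (b :: y) = editWord x y ++ [some b] := by
  simp [editWord]

variable [Fintype α] [DecidableEq α]

/- `(editDistanceGrammar α N).NT` is `Fin (N + 1)` only up to unfolding, which `simp` does not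
see through: sentential forms are therefore kept typed over `(editDistanceGrammar α N).NT`
throughout, and `r` is reverted here so that unfolding the grammar retypes it too. -/
theorem mem_rules_iff {r : ContextFreeRule (Option α) (editDistanceGrammar α N).NT} :
    r ∈ (editDistanceGrammar α N).rules ↔
      (∃ d, ∃ k : Fin (N + 1),
        r = ⟨k, [terminal (some d), nonterminal k, terminal (some d)]⟩) ∨
      (∃ d₁ d₂, ∃ j : Fin N, d₁ ≠ d₂ ∧
        r = ⟨j.succ, [terminal (some d₁), nonterminal j.castSucc, terminal (some d₂)]⟩) ∨
      (∃ d, ∃ j : Fin N, r = ⟨j.succ, [terminal (some d), nonterminal j.castSucc]⟩) ∨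
      (∃ d, ∃ j : Fin N, r = ⟨j.succ, [nonterminal j.castSucc, terminal (some d)]⟩) ∨
      (∃ k : Fin (N + 1), r = ⟨k, [terminal none]⟩) := by
  revert r
  unfold editDistanceGrammar
  intro r
  simp only [Finset.mem_union, Finset.mem_image, Finset.mem_filter,
    Finset.mem_univ, true_and, Prod.exists]
  simp only [eq_comm, or_assoc]

section Steps

variable {w : List (Symbol (Option α) (editDistanceGrammar α N).NT)}

theorem derives_match (a : α) (k : Fin (N + 1))
    (h : (editDistanceGrammar α N).Derives [nonterminal k] w) :
    (editDistanceGrammar α N).Derives [nonterminal k]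
      (terminal (some a) :: w ++ [terminal (some a)]) := by
  simpa using derives_of_mem_rules (p := [terminal (some a)]) (q := [terminal (some a)])
    (mem_rules_iff.2 <| .inl ⟨a, k, rfl⟩) h

theorem derives_substitute {a b : α} (hab : a ≠ b) (j : Fin N)
    (h : (editDistanceGrammar α N).Derives [nonterminal j.castSucc] w) :
    (editDistanceGrammar α N).Derives [nonterminal j.succ]
      (terminal (some a) :: w ++ [terminal (some b)]) := by
  simpa using derives_of_mem_rules (p := [terminal (some a)]) (q := [terminal (some b)])
    (mem_rules_iff.2 <| .inr <| .inl ⟨a, b, j, hab, rfl⟩) h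

theorem derives_delete (a : α) (j : Fin N)
    (h : (editDistanceGrammar α N).Derives [nonterminal j.castSucc] w) :
    (editDistanceGrammar α N).Derives [nonterminal j.succ] (terminal (some a) :: w) := by
  simpa using derives_of_mem_rules (p := [terminal (some a)]) (q := [])
    (mem_rules_iff.2 <| .inr <| .inr <| .inl ⟨a, j, rfl⟩) h

theorem derives_insert (b : α) (j : Fin N)
    (h : (editDistanceGrammar α N).Derives [nonterminal j.castSucc] w) :
    (editDistanceGrammar α N).Derives [nonterminal j.succ] (w ++ [terminal (some b)]) := by
  simpa using derives_of_mem_rules (p := []) (q := [terminal (some b)])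
    (mem_rules_iff.2 <| .inr <| .inr <| .inr <| .inl ⟨b, j, rfl⟩) h

end Steps

theorem derives_editWord : ∀ (x y : List α) (k : Fin (N + 1)),
    levenshtein defaultCost x y ≤ k →
      (editDistanceGrammar α N).Derives [nonterminal k] ((editWord x y).map terminal)
  | [], [], k, _ =>
    Produces.single ⟨_, mem_rules_iff.2 <| .inr <| .inr <| .inr <| .inr ⟨k, rfl⟩,
      ContextFreeRule.Rewrites.input_output⟩
  | [], b :: y, k, h => by
    rw [levenshtein_nil_cons, defaultCost_insert] at h
    obtain ⟨j, rfl, hj⟩ := Fin.exists_succ_eq_of_lt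
      (show levenshtein defaultCost [] y < k by omega)
    simpa using derives_insert b j (derives_editWord [] y _ hj)
  | a :: x, [], k, h => by
    rw [levenshtein_cons_nil, defaultCost_delete] at h
    obtain ⟨j, rfl, hj⟩ := Fin.exists_succ_eq_of_lt
      (show levenshtein defaultCost x [] < k by omega)
    simpa using derives_delete a j (derives_editWord x [] _ hj)
  | a :: x, b :: y, k, h => by
    rw [levenshtein_cons_cons, min_le_iff, min_le_iff, defaultCost_delete, defaultCost_insert,
      defaultCost_substitute] at h
    rcases h with h | h | h
    · obtain ⟨j, rfl, hj⟩ := Fin.exists_succ_eq_of_lt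
        (show levenshtein defaultCost (a :: x) y < k by omega)
      simpa using derives_insert b j (derives_editWord (a :: x) y _ hj)
    · obtain ⟨j, rfl, hj⟩ := Fin.exists_succ_eq_of_lt
        (show levenshtein defaultCost x (b :: y) < k by omega)
      simpa using derives_delete a j (derives_editWord x (b :: y) _ hj)
    · split_ifs at h with hab
      · subst hab
        simpa using derives_match a k (derives_editWord x y k (by omega))
      · obtain ⟨j, rfl, hj⟩ := Fin.exists_succ_eq_of_lt
          (show levenshtein defaultCost x y < k by omega)
        simpa using derives_substitute hab j (derives_editWord x y _ hj)
termination_by x y => x.length + y.length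

theorem exists_levenshtein_le_of_derives {x y z : List (Option α)} {k : Fin (N + 1)}
    (h : (editDistanceGrammar α N).Derives
      (x.map terminal ++ (nonterminal k : Symbol (Option α) (editDistanceGrammar α N).NT) ::
        y.map terminal) (z.map terminal)) :
    ∃ a b : List α, levenshtein defaultCost a b ≤ k ∧ z = x ++ editWord a b ++ y := by
  generalize hv : x.map terminal ++
    (nonterminal k : Symbol (Option α) (editDistanceGrammar α N).NT) :: y.map terminal = v at h
  induction h using Relation.ReflTransGen.head_induction_on generalizing x y k with
  | refl =>
    exact (Symbol.nonterminal_notMem_map_terminal k z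
      (hv ▸ List.mem_append_right _ List.mem_cons_self)).elim
  | head hstep htail ih =>
    obtain ⟨r, hr, hrw⟩ := hstep
    obtain ⟨p, q, hu, rfl⟩ := hrw.exists_parts
    rw [← hv, List.append_assoc, List.singleton_append] at hu
    obtain ⟨rfl, hk, rfl⟩ := (List.append_cons_inj_of_notMem
      (Symbol.nonterminal_notMem_map_terminal _ x)
      (Symbol.nonterminal_notMem_map_terminal _ y)).1 hu
    rcases mem_rules_iff.1 hr with ⟨d, k', rfl⟩ | ⟨d₁, d₂, j, -, rfl⟩ | ⟨d, j, rfl⟩ |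
      ⟨d, j, rfl⟩ | ⟨k', rfl⟩ <;>
      obtain rfl := Symbol.nonterminal.inj hk
    · obtain ⟨a, b, hab, rfl⟩ := ih (x := x ++ [some d]) (y := some d :: y) (k := k) (by simp)
      exact ⟨d :: a, d :: b, (levenshtein_cons_cons_self_le d a b).trans hab, by simp⟩
    · obtain ⟨a, b, hab, rfl⟩ :=
        ih (x := x ++ [some d₁]) (y := some d₂ :: y) (k := j.castSucc) (by simp)
      refine ⟨d₁ :: a, d₂ :: b, (levenshtein_cons_cons_le d₁ d₂ a b).trans ?_, by simp⟩
      simpa using hab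
    · obtain ⟨a, b, hab, rfl⟩ := ih (x := x ++ [some d]) (y := y) (k := j.castSucc) (by simp)
      refine ⟨d :: a, b, (levenshtein_cons_left_le d a b).trans ?_, by simp⟩
      simpa using hab
    · obtain ⟨a, b, hab, rfl⟩ := ih (x := x) (y := some d :: y) (k := j.castSucc) (by simp)
      refine ⟨a, d :: b, (levenshtein_cons_right_le d a b).trans ?_, by simp⟩
      simpa using hab
    · have hz := (Derives.eq_map_terminal (u := x ++ none :: y) (by simpa using htail))
      obtain rfl := List.map_injective_iff.2 (fun _ _ => Symbol.terminal.inj) hz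
      exact ⟨[], [], Nat.zero_le _, by simp⟩

end EditDistanceGrammar

/-- The language generated by the edit-distance grammar is exactly
`{ x · # · reverse(y) : x, y ∈ Σ*, editDistance x y ≤ N }`. -/
theorem editDistanceGrammar_language (α : Type) [Fintype α] [DecidableEq α] (N : ℕ) :
    (editDistanceGrammar α N).language =
      { w : List (Option α) | ∃ x y : List α,
          levenshtein Levenshtein.defaultCost x y ≤ N ∧
          w = x.map some ++ none :: (y.map some).reverse } := by
  ext w
  rw [ContextFreeGrammar.mem_language_iff]
  constructor
  · intro h
    obtain ⟨x, y, hxy, rfl⟩ :=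
      EditDistanceGrammar.exists_levenshtein_le_of_derives (x := []) (y := []) (k := Fin.last N) h
    exact ⟨x, y, by simpa using hxy, by simp [EditDistanceGrammar.editWord]⟩
  · rintro ⟨x, y, hxy, rfl⟩
    exact EditDistanceGrammar.derives_editWord x y (Fin.last N) (by simpa using hxy)
end
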